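/- arXiv:2605.13666 — 2 statements merged into one kernel-verified Lean document; each statement's English description precedes it below -/
import Mathlib

section
/- (Squeeze theorem) Let A be the set of prime numbers and let N ∈ ℕ. Suppose L, U ∈ ℝ satisfy 0 ≤ L < E[τ_{N+i}] < U for all 1 ≤ i ≤ 6 (in particular these expectations are finite). Then E_{N,L}[τ_0] < E[τ] < E_{N,U}[τ_0]. -/
open MeasureTheory ProbabilityTheory
open scoped ENNReal NNReal

noncomputable section

/-- The cumulative sum `S_t^(s) = s + X_1 + ... + X_t`, where the die faces are
`ω 0 + 1, ω 1 + 1, ...` (each in `{1,...,6}`). -/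
def partialSum (s : ℕ) (ω : ℕ → Fin 6) (t : ℕ) : ℕ :=
  s + ∑ j ∈ Finset.range t, ((ω j : ℕ) + 1)

/-- The hitting time `τ_s = inf {t : S_t^(s) ∈ A}`, with value `⊤` if the sum never hits `A`. -/
def hitTime (A : Set ℕ) (s : ℕ) (ω : ℕ → Fin 6) : ℕ∞ :=
  sInf {t : ℕ∞ | ∃ n : ℕ, t = (n : ℕ∞) ∧ partialSum s ω n ∈ A}

/-- The expectation `E[τ_s]`, as a Lebesgue integral with values in `[0,∞]`. -/
def hitExp (P : Measure (ℕ → Fin 6)) (A : Set ℕ) (s : ℕ) : ℝ≥0∞ :=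
  ∫⁻ ω, (hitTime A s ω : ℝ≥0∞) ∂P

open Classical in
/-- The truncated expectation `E_{N,B}[τ_s]`, defined by backward recursion. -/
def EC (A : Set ℕ) (N : ℕ) (B : ℝ) (s : ℕ) : ℝ :=
  if N < s then B
  else if s ∈ A then 0
  else 1 + (1/6) * ∑ i ∈ Finset.range 6, EC A N B (s + i + 1)
termination_by N + 1 - s
decreasing_by omega

/-!
Both `E[τ_s]` and `E_{N,B}[τ_s]` solve the same backward recursion for `s ≤ N`: the value is `0`
on `A`, and otherwise one plus the average of the values at `s + 1, …, s + 6`. For `E[τ_s]` this is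
first-step analysis, which here comes from counting: `P(τ_s > t)` is the number of die sequences of
length `t` whose walk from `s` avoids `A`, divided by `6 ^ t`, and such a sequence of length `t + 1`
is a first roll followed by an avoiding sequence of length `t`. The two solutions differ only in
their values at `N + 1, …, N + 6`, and the recursion is monotone, so a strict comparison there
propagates down to `s = 0`. It stays strict at every step because among any six consecutive
positive integers one is not prime.
-/

open Finset

theorem ENat.toENNReal_eq_tsum (n : ℕ∞) :
    (n : ℝ≥0∞) = ∑' t : ℕ, if (t : ℕ∞) < n then 1 else 0 := by
  induction n using ENat.recTopCoe with
  | top => simp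
  | coe m =>
    rw [tsum_eq_sum (s := range m) fun t ht => if_neg (by simpa using ht),
      sum_congr rfl fun t ht => if_pos (by simpa using ht)]
    simp

theorem MeasureTheory.lintegral_toENNReal_eq_tsum {Ω : Type*} [MeasurableSpace Ω] (μ : Measure Ω)
    {f : Ω → ℕ∞} (hf : ∀ t : ℕ, MeasurableSet {ω | (t : ℕ∞) < f ω}) :
    ∫⁻ ω, (f ω : ℝ≥0∞) ∂μ = ∑' t : ℕ, μ {ω | (t : ℕ∞) < f ω} := by
  simp_rw [ENat.toENNReal_eq_tsum]
  rw [lintegral_tsum fun t =>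
    (Measurable.ite (hf t) measurable_const measurable_const).aemeasurable]
  congr 1 with t
  rw [← lintegral_indicator_one (hf t)]
  congr 1 with ω
  simp [Set.indicator_apply]

theorem ENNReal.lt_toReal_of_ofReal_lt {a : ℝ} {b : ℝ≥0∞} (hb : b ≠ ⊤)
    (h : ENNReal.ofReal a < b) : a < b.toReal := by
  rw [← ENNReal.ofReal_toReal hb] at h
  exact (ENNReal.ofReal_lt_ofReal_iff'.1 h).1

theorem Nat.backward_induction_window {N k : ℕ} {p : ℕ → Prop}
    (top : ∀ i, 1 ≤ i → i ≤ k → p (N + i))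
    (step : ∀ s ≤ N, (∀ i < k, p (s + i + 1)) → p s) :
    ∀ s ≤ N + k, p s := by
  intro s
  induction h : N + k - s using Nat.strong_induction_on generalizing s with
  | _ d ih =>
    intro hs
    by_cases hsN : N < s
    · simpa [show N + (s - N) = s by omega] using top (s - N) (by omega) (by omega)
    · exact step s (by omega) fun i hi => ih _ (by omega) _ rfl (by omega)

def IsFirstStepSolution {α : Type*} [Semiring α] [Div α] (A : Set ℕ) (N : ℕ) (f : ℕ → α) :
    Prop :=
  ∀ s ≤ N, (s ∈ A → f s = 0) ∧ (s ∉ A → f s = 1 + 1 / 6 * ∑ i ∈ range 6, f (s + i + 1))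

namespace IsFirstStepSolution

variable {A : Set ℕ} {N : ℕ}

theorem ne_top {e : ℕ → ℝ≥0∞} (he : IsFirstStepSolution A N e)
    (htop : ∀ i, 1 ≤ i → i ≤ 6 → e (N + i) ≠ ⊤) : ∀ s ≤ N + 6, e s ≠ ⊤ := by
  refine Nat.backward_induction_window htop fun s hs hsucc => ?_
  by_cases hsA : s ∈ A
  · simp [(he s hs).1 hsA]
  · rw [(he s hs).2 hsA]
    exact ENNReal.add_ne_top.2 ⟨ENNReal.one_ne_top, ENNReal.mul_ne_top (by simp)
      (ENNReal.sum_ne_top.2 fun i hi => hsucc i (mem_range.1 hi))⟩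

theorem toReal {e : ℕ → ℝ≥0∞} (he : IsFirstStepSolution A N e) (hfin : ∀ s ≤ N + 6, e s ≠ ⊤) :
    IsFirstStepSolution A N fun s => (e s).toReal := by
  intro s hs
  refine ⟨fun hsA => by simp [(he s hs).1 hsA], fun hsA => ?_⟩
  have hsucc : ∀ i ∈ range 6, e (s + i + 1) ≠ ⊤ := fun i hi =>
    hfin _ (by have := mem_range.1 hi; omega)
  dsimp only
  rw [(he s hs).2 hsA, ENNReal.toReal_add ENNReal.one_ne_top
    (ENNReal.mul_ne_top (by simp) (ENNReal.sum_ne_top.2 hsucc)), ENNReal.toReal_mul,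
    ENNReal.toReal_sum hsucc]
  simp

theorem lt_of_boundary_lt {f g : ℕ → ℝ} (hf : IsFirstStepSolution A N f)
    (hg : IsFirstStepSolution A N g) (hA : ∀ s, ∃ i < 6, s + i + 1 ∉ A)
    (hbdry : ∀ i, 1 ≤ i → i ≤ 6 → f (N + i) < g (N + i)) {s : ℕ} (hs : s ≤ N) (hsA : s ∉ A) :
    f s < g s := by
  suffices h : ∀ s ≤ N + 6, f s ≤ g s ∧ (s ∉ A → f s < g s) from (h s (by omega)).2 hsA
  refine Nat.backward_induction_window
    (fun i h1 h6 => ⟨(hbdry i h1 h6).le, fun _ => hbdry i h1 h6⟩) fun s hs hsucc => ?_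
  by_cases hsA : s ∈ A
  · simp [(hf s hs).1 hsA, (hg s hs).1 hsA, hsA]
  · obtain ⟨j, hj, hjA⟩ := hA s
    have hsum : ∑ i ∈ range 6, f (s + i + 1) < ∑ i ∈ range 6, g (s + i + 1) :=
      sum_lt_sum (fun i hi => (hsucc i (mem_range.1 hi)).1) ⟨j, mem_range.2 hj, (hsucc j hj).2 hjA⟩
    have hlt : f s < g s := by
      rw [(hf s hs).2 hsA, (hg s hs).2 hsA]
      linarith
    exact ⟨hlt.le, fun _ => hlt⟩

end IsFirstStepSolution

theorem EC_of_lt {A : Set ℕ} {N s : ℕ} {B : ℝ} (h : N < s) : EC A N B s = B := by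
  rw [EC, if_pos h]

theorem isFirstStepSolution_EC (A : Set ℕ) (N : ℕ) (B : ℝ) : IsFirstStepSolution A N (EC A N B) :=
  fun s hs => ⟨fun hsA => by rw [EC, if_neg (by omega), if_pos hsA],
    fun hsA => by rw [EC, if_neg (by omega), if_neg hsA]⟩

theorem exists_lt_six_not_prime (s : ℕ) : ∃ i < 6, ¬ (s + i + 1).Prime := by
  rcases Nat.mod_two_eq_zero_or_one s with h | h
  · exact ⟨3, by norm_num, fun hp => by have := hp.eq_two_or_odd; omega⟩
  · exact ⟨2, by norm_num, fun hp => by have := hp.eq_two_or_odd; omega⟩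

section PathPrefix

variable {α : Type*} [MeasurableSpace α]

def pathPrefix (t : ℕ) (ω : ℕ → α) : Fin t → α := fun j => ω j

theorem measurable_pathPrefix (t : ℕ) : Measurable (pathPrefix (α := α) t) :=
  measurable_pi_lambda _ fun j => measurable_pi_apply (j : ℕ)

variable [MeasurableSingletonClass α] {P : Measure (ℕ → α)} {p : ℝ≥0∞}

theorem measure_pathPrefix_preimage_singleton (hIndep : iIndepFun (fun n (ω : ℕ → α) => ω n) P)
    (hp : ∀ n a, P {ω | ω n = a} = p) {t : ℕ} (b : Fin t → α) :
    P (pathPrefix t ⁻¹' {b}) = p ^ t := by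
  have hcyl : pathPrefix t ⁻¹' {b} =
      ⋂ j ∈ (univ : Finset (Fin t)), (fun ω : ℕ → α => ω j) ⁻¹' {b j} := by
    ext ω
    simp [pathPrefix, funext_iff]
  rw [hcyl, (hIndep.precomp Fin.val_injective).measure_inter_preimage_eq_mul _
    fun j _ => measurableSet_singleton (b j)]
  simp [Set.preimage, hp]

theorem measure_pathPrefix_preimage [Countable α]
    (hIndep : iIndepFun (fun n (ω : ℕ → α) => ω n) P) (hp : ∀ n a, P {ω | ω n = a} = p) {t : ℕ}
    (S : Set (Fin t → α)) :
    P (pathPrefix t ⁻¹' S) = S.encard * p ^ t := by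
  rw [← tsum_measure_preimage_singleton S.to_countable
    fun b _ => measurable_pathPrefix t (measurableSet_singleton b)]
  simp_rw [measure_pathPrefix_preimage_singleton hIndep hp]
  exact ENNReal.tsum_set_const S _

end PathPrefix

theorem partialSum_zero (s : ℕ) (ω : ℕ → Fin 6) : partialSum s ω 0 = s := by
  simp [partialSum]

theorem partialSum_succ (s : ℕ) (ω : ℕ → Fin 6) (t : ℕ) :
    partialSum s ω (t + 1) = partialSum (s + ω 0 + 1) (fun n => ω (n + 1)) t := by
  simp only [partialSum, sum_range_succ']
  ring

def Avoids (A : Set ℕ) : ℕ → (t : ℕ) → (Fin t → Fin 6) → Prop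
  | s, 0, _ => s ∉ A
  | s, t + 1, a => s ∉ A ∧ Avoids A (s + a 0 + 1) t (Fin.tail a)

theorem avoids_pathPrefix_iff {A : Set ℕ} {s t : ℕ} {ω : ℕ → Fin 6} :
    Avoids A s t (pathPrefix t ω) ↔ ∀ u < t + 1, partialSum s ω u ∉ A := by
  induction t generalizing s ω with
  | zero => simp [Avoids, partialSum_zero]
  | succ t ih =>
    rw [Nat.forall_lt_succ_left, Avoids, partialSum_zero]
    simp only [partialSum_succ]
    exact and_congr_right fun _ => @ih (s + ω 0 + 1) fun n => ω (n + 1)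

theorem lt_hitTime_iff_avoids {A : Set ℕ} {s t : ℕ} {ω : ℕ → Fin 6} :
    (t : ℕ∞) < hitTime A s ω ↔ Avoids A s t (pathPrefix t ω) := by
  rw [avoids_pathPrefix_iff, hitTime, ← ENat.add_one_le_iff (ENat.natCast_ne_top t), le_sInf_iff]
  constructor
  · intro h u hu hmem
    have := h u ⟨u, rfl, hmem⟩
    norm_cast at this
    omega
  · rintro h _ ⟨u, rfl, hmem⟩
    norm_cast
    by_contra! hu
    exact h u (by omega) hmem

theorem setOf_lt_hitTime (A : Set ℕ) (s t : ℕ) :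
    {ω | (t : ℕ∞) < hitTime A s ω} = pathPrefix t ⁻¹' {a | Avoids A s t a} := by
  ext ω
  exact lt_hitTime_iff_avoids

theorem hitTime_eq_zero_of_mem {A : Set ℕ} {s : ℕ} (hs : s ∈ A) (ω : ℕ → Fin 6) :
    hitTime A s ω = 0 := by
  have h0 : ¬ ((0 : ℕ) : ℕ∞) < hitTime A s ω := fun h => lt_hitTime_iff_avoids.1 h hs
  simpa using h0

def avoidsSuccEquiv {A : Set ℕ} {s : ℕ} (hs : s ∉ A) (t : ℕ) :
    {a // Avoids A s (t + 1) a} ≃ Σ i : Fin 6, {b // Avoids A (s + i + 1) t b} where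
  toFun a := ⟨a.1 0, Fin.tail a.1, a.2.2⟩
  invFun b := ⟨Fin.cons b.1 b.2.1, hs, by simpa [Fin.tail_cons] using b.2.2⟩
  left_inv a := Subtype.ext (Fin.cons_self_tail a.1)
  right_inv _ := rfl

theorem hitExp_of_mem (P : Measure (ℕ → Fin 6)) {A : Set ℕ} {s : ℕ} (hs : s ∈ A) :
    hitExp P A s = 0 := by
  simp [hitExp, hitTime_eq_zero_of_mem hs]

theorem hitExp_eq_tsum (P : Measure (ℕ → Fin 6)) (A : Set ℕ) (s : ℕ) :
    hitExp P A s = ∑' t : ℕ, P {ω | (t : ℕ∞) < hitTime A s ω} :=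
  lintegral_toENNReal_eq_tsum P fun t => setOf_lt_hitTime A s t ▸
    measurable_pathPrefix t (Set.to_countable _).measurableSet

section FirstStep

variable {P : Measure (ℕ → Fin 6)} (hIndep : iIndepFun (fun n (ω : ℕ → Fin 6) => ω n) P)
  (hUnif : ∀ (n : ℕ) (i : Fin 6), P {ω | ω n = i} = 1 / 6)
include hIndep hUnif

theorem measure_lt_hitTime (A : Set ℕ) (s t : ℕ) :
    P {ω | (t : ℕ∞) < hitTime A s ω} = Nat.card {a // Avoids A s t a} * (1 / 6) ^ t := by
  rw [setOf_lt_hitTime, measure_pathPrefix_preimage hIndep hUnif, Set.encard,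
    ENat.card_eq_coe_natCard]
  rfl

theorem measure_lt_hitTime_succ {A : Set ℕ} {s : ℕ} (hs : s ∉ A) (t : ℕ) :
    P {ω | ((t + 1 : ℕ) : ℕ∞) < hitTime A s ω} =
      1 / 6 * ∑ i ∈ range 6, P {ω | (t : ℕ∞) < hitTime A (s + i + 1) ω} := by
  simp only [measure_lt_hitTime hIndep hUnif]
  rw [Nat.card_congr (avoidsSuccEquiv hs t), Nat.card_sigma,
    ← Fin.sum_univ_eq_sum_range (fun i => (Nat.card {b // Avoids A (s + i + 1) t b} : ℝ≥0∞) * _),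
    Nat.cast_sum, mul_sum, sum_mul]
  refine sum_congr rfl fun i _ => ?_
  ring

theorem measure_zero_lt_hitTime {A : Set ℕ} {s : ℕ} (hs : s ∉ A) :
    P {ω | ((0 : ℕ) : ℕ∞) < hitTime A s ω} = 1 := by
  rw [measure_lt_hitTime hIndep hUnif]
  simp [Avoids, hs]

theorem hitExp_eq_one_add {A : Set ℕ} {s : ℕ} (hs : s ∉ A) :
    hitExp P A s = 1 + 1 / 6 * ∑ i ∈ range 6, hitExp P A (s + i + 1) := by
  simp only [hitExp_eq_tsum P]
  rw [tsum_eq_zero_add' ENNReal.summable, measure_zero_lt_hitTime hIndep hUnif hs]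
  simp only [measure_lt_hitTime_succ hIndep hUnif hs]
  rw [ENNReal.tsum_mul_left, Summable.tsum_finsetSum fun _ _ => ENNReal.summable]

theorem isFirstStepSolution_hitExp (A : Set ℕ) (N : ℕ) : IsFirstStepSolution A N (hitExp P A) :=
  fun _ _ => ⟨hitExp_of_mem P, hitExp_eq_one_add hIndep hUnif⟩

end FirstStep

theorem squeeze_theorem_general
    (P : Measure (ℕ → Fin 6))
    (hIndep : iIndepFun (fun n (ω : ℕ → Fin 6) => ω n) P)
    (hUnif : ∀ (n : ℕ) (i : Fin 6), P {ω | ω n = i} = 1 / 6) (N : ℕ) (L U : ℝ)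
    (hLU : ∀ i : ℕ, 1 ≤ i → i ≤ 6 →
      ENNReal.ofReal L < hitExp P {n | n.Prime} (N + i) ∧
        hitExp P {n | n.Prime} (N + i) < ENNReal.ofReal U) :
    ENNReal.ofReal (EC {n | n.Prime} N L 0) < hitExp P {n | n.Prime} 0 ∧
      hitExp P {n | n.Prime} 0 < ENNReal.ofReal (EC {n | n.Prime} N U 0) := by
  set A : Set ℕ := {n | n.Prime}
  have hE := isFirstStepSolution_hitExp hIndep hUnif A N
  have hfin := hE.ne_top fun i h1 h6 => (hLU i h1 h6).2.ne_top
  have hfin0 := hfin 0 (Nat.le_add_left 0 _)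
  have hr := hE.toReal hfin
  have hA : ∀ s, ∃ i < 6, s + i + 1 ∉ A := exists_lt_six_not_prime
  have h0 : 0 ∉ A := Nat.not_prime_zero
  have hlow : EC A N L 0 < (hitExp P A 0).toReal :=
    (isFirstStepSolution_EC A N L).lt_of_boundary_lt hr hA (fun i h1 h6 => by
      rw [EC_of_lt (by omega)]
      exact ENNReal.lt_toReal_of_ofReal_lt (hfin _ (by omega)) (hLU i h1 h6).1) N.zero_le h0
  have hup : (hitExp P A 0).toReal < EC A N U 0 :=
    hr.lt_of_boundary_lt (isFirstStepSolution_EC A N U) hA (fun i h1 h6 => by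
      rw [EC_of_lt (by omega)]
      exact ENNReal.toReal_lt_of_lt_ofReal (hLU i h1 h6).2) N.zero_le h0
  have hpos : 0 < (hitExp P A 0).toReal :=
    ENNReal.toReal_pos (by simp [(hE 0 N.zero_le).2 h0]) hfin0
  constructor
  · rw [← ENNReal.ofReal_toReal hfin0]
    exact ENNReal.ofReal_lt_ofReal_iff'.2 ⟨hlow, hpos⟩
  · exact (ENNReal.lt_ofReal_iff_toReal_lt hfin0).2 hup

/-- Squeeze theorem: if `0 ≤ L < E[τ_{N+i}] < U` for all `1 ≤ i ≤ 6`, then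
`E_{N,L}[τ_0] < E[τ] < E_{N,U}[τ_0]`, where `A` is the set of primes. -/
theorem squeeze_theorem
    (P : Measure (ℕ → Fin 6)) [IsProbabilityMeasure P]
    (hIndep : iIndepFun (fun n (ω : ℕ → Fin 6) => ω n) P)
    (hUnif : ∀ (n : ℕ) (i : Fin 6), P {ω | ω n = i} = 1 / 6) (N : ℕ) (L U : ℝ) (hL : 0 ≤ L)
    (hLU : ∀ i : ℕ, 1 ≤ i → i ≤ 6 →
      ENNReal.ofReal L < hitExp P {n | n.Prime} (N + i) ∧
        hitExp P {n | n.Prime} (N + i) < ENNReal.ofReal U) :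
    ENNReal.ofReal (EC {n | n.Prime} N L 0) < hitExp P {n | n.Prime} 0 ∧
      hitExp P {n | n.Prime} 0 < ENNReal.ofReal (EC {n | n.Prime} N U 0) :=
  squeeze_theorem_general P hIndep hUnif N L U hLU
end
end

section
/- Fix a non-negative integer s. For every integer n ≥ s, the landing probability satisfies LP_s(n) ≤ (5/6)^{π(s, n−1)}. -/
noncomputable section

open Classical in
/-- The auxiliary quantity `r_s(n)`: `r_s(n) = 1` if `n = s`; `r_s(n) = 0` if `n < s` or
`n` is a prime greater than `s`; otherwise `r_s(n) = (1/6)·Σ_{i=1}^{6} r_s(n−i)`. -/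
def rAux (s : ℕ) (n : ℤ) : ℚ :=
  if n = (s : ℤ) then 1
  else if n < (s : ℤ) ∨ ((s : ℤ) < n ∧ Prime n) then 0
  else (1/6) * ∑ i ∈ Finset.range 6, rAux s (n - (i + 1))
termination_by (n - s).toNat
decreasing_by omega

open Classical in
/-- The landing probability: `LP_s(s) = 1` and `LP_s(n) = (1/6)·Σ_{i=1}^{6} r_s(n−i)` for `n > s`. -/
def LP (s : ℕ) (n : ℤ) : ℚ :=
  if n = (s : ℤ) then 1
  else (1/6) * ∑ i ∈ Finset.range 6, rAux s (n - (i + 1))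

open Classical in
/-- `π(s,n)`: the number of primes `p` with `s < p ≤ n` (for integers `s`, `n`). -/
def primesBetween (s n : ℤ) : ℕ :=
  ((Finset.Icc (s + 1) n).filter (fun p => Prime p)).card

lemma rAux_nonneg (s : ℕ) (n : ℤ) : 0 ≤ rAux s n := by
  rw [rAux]
  split
  · exact zero_le_one
  split
  · exact le_refl 0
  · apply mul_nonneg (by norm_num)
    apply Finset.sum_nonneg
    intro i hi
    exact rAux_nonneg s (n - (i + 1))
termination_by (n - s).toNat
decreasing_by
  simp only [Finset.mem_range] at hi
  omega

lemma rAux_of_lt (s : ℕ) (n : ℤ) (h : n < (s : ℤ)) : rAux s n = 0 := by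
  rw [rAux, if_neg (by omega), if_pos (Or.inl h)]

lemma rAux_self (s : ℕ) : rAux s (s : ℤ) = 1 := by
  rw [rAux, if_pos rfl]

lemma rAux_of_prime (s : ℕ) (n : ℤ) (h : (s : ℤ) < n) (hp : Prime n) : rAux s n = 0 := by
  rw [rAux, if_neg (by omega), if_pos (Or.inr ⟨h, hp⟩)]

lemma sum6 (s : ℕ) (n : ℤ) :
    ∑ i ∈ Finset.range 6, rAux s (n - (i + 1)) =
      rAux s (n - 1) + rAux s (n - 2) + rAux s (n - 3) + rAux s (n - 4)
        + rAux s (n - 5) + rAux s (n - 6) := by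
  norm_num [Finset.sum_range_succ]

lemma rAux_of_not_prime (s : ℕ) (n : ℤ) (h : (s : ℤ) < n) (hp : ¬ Prime n) :
    rAux s n = (1/6) * (rAux s (n - 1) + rAux s (n - 2) + rAux s (n - 3)
      + rAux s (n - 4) + rAux s (n - 5) + rAux s (n - 6)) := by
  have hc : ¬(n < (s : ℤ) ∨ ((s : ℤ) < n ∧ Prime n)) := by
    rintro (h1 | ⟨-, h2⟩)
    · omega
    · exact hp h2
  rw [rAux, if_neg (by omega), if_neg hc, sum6]

def W (s : ℕ) (n : ℤ) : ℚ :=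
  (6 * rAux s n + 5 * rAux s (n-1) + 4 * rAux s (n-2) + 3 * rAux s (n-3)
   + 2 * rAux s (n-4) + rAux s (n-5)) / 6

lemma W_succ_prime (s : ℕ) (n : ℤ) (h : (s : ℤ) ≤ n) (hp : Prime (n + 1)) :
    W s (n + 1) ≤ 5/6 * W s n := by
  have h0 : rAux s (n + 1) = 0 := rAux_of_prime s (n+1) (by omega) hp
  have e1 : n + 1 - 1 = n := by ring
  have e2 : n + 1 - 2 = n - 1 := by ring
  have e3 : n + 1 - 3 = n - 2 := by ring
  have e4 : n + 1 - 4 = n - 3 := by ring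
  have e5 : n + 1 - 5 = n - 4 := by ring
  unfold W
  rw [h0, e1, e2, e3, e4, e5]
  have := rAux_nonneg s n
  have := rAux_nonneg s (n-1)
  have := rAux_nonneg s (n-2)
  have := rAux_nonneg s (n-3)
  have := rAux_nonneg s (n-4)
  have := rAux_nonneg s (n-5)
  linarith

lemma W_succ_not_prime (s : ℕ) (n : ℤ) (h : (s : ℤ) ≤ n) (hp : ¬ Prime (n + 1)) :
    W s (n + 1) = W s n := by
  have h0 := rAux_of_not_prime s (n+1) (by omega) hp
  have e1 : n + 1 - 1 = n := by ring
  have e2 : n + 1 - 2 = n - 1 := by ring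
  have e3 : n + 1 - 3 = n - 2 := by ring
  have e4 : n + 1 - 4 = n - 3 := by ring
  have e5 : n + 1 - 5 = n - 4 := by ring
  have e6 : n + 1 - 6 = n - 5 := by ring
  rw [e1, e2, e3, e4, e5, e6] at h0
  unfold W
  rw [h0, e1, e2, e3, e4, e5]
  ring

open Classical in
lemma pb_succ (a n : ℤ) (h : a ≤ n) :
    primesBetween a (n + 1) = primesBetween a n + (if Prime (n + 1) then 1 else 0) := by
  classical
  unfold primesBetween
  have hi : Finset.Icc (a + 1) (n + 1) = insert (n + 1) (Finset.Icc (a + 1) n) := by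
    ext x
    simp only [Finset.mem_Icc, Finset.mem_insert]
    omega
  rw [hi, Finset.filter_insert]
  by_cases hp : Prime (n + 1)
  · rw [if_pos hp, if_pos hp, Finset.card_insert_of_notMem (by simp [Finset.mem_Icc])]
  · rw [if_neg hp, if_neg hp]
    simp

lemma W_bound (s : ℕ) (n : ℤ) (hn : (s : ℤ) ≤ n) :
    W s n ≤ (5/6 : ℚ) ^ primesBetween (s : ℤ) n := by
  rcases eq_or_lt_of_le hn with h | h
  · subst h
    have h0 : primesBetween (s : ℤ) (s : ℤ) = 0 := by
      unfold primesBetween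
      rw [Finset.Icc_eq_empty (by omega)]
      simp
    rw [h0]
    unfold W
    rw [rAux_self, rAux_of_lt s _ (by omega), rAux_of_lt s _ (by omega),
      rAux_of_lt s _ (by omega), rAux_of_lt s _ (by omega), rAux_of_lt s _ (by omega)]
    norm_num
  · classical
    have hn' : (s : ℤ) ≤ n - 1 := by omega
    have ih := W_bound s (n - 1) hn'
    have hmain := pb_succ (s : ℤ) (n - 1) hn'
    rw [show n - 1 + 1 = n from by ring] at hmain
    have hpow : (0:ℚ) ≤ (5/6 : ℚ) ^ primesBetween (s : ℤ) (n - 1) := by positivity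
    by_cases hp : Prime n
    · have hstep := W_succ_prime s (n - 1) hn' (by rw [show n - 1 + 1 = n from by ring]; exact hp)
      rw [show n - 1 + 1 = n from by ring] at hstep
      rw [hmain, if_pos hp, pow_succ]
      calc W s n ≤ 5/6 * W s (n - 1) := hstep
        _ ≤ 5/6 * (5/6 : ℚ) ^ primesBetween (s : ℤ) (n - 1) := by nlinarith
        _ = _ := by ring
    · have hstep := W_succ_not_prime s (n - 1) hn' (by rw [show n - 1 + 1 = n from by ring]; exact hp)
      rw [show n - 1 + 1 = n from by ring] at hstep
      rw [hmain, if_neg hp, hstep]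
      simpa using ih
termination_by (n - s).toNat
decreasing_by omega

/-- For a fixed non-negative integer `s` and every integer `n ≥ s`, the landing
probability satisfies `LP_s(n) ≤ (5/6)^{π(s, n−1)}`. -/
theorem landing_probability_bound (s : ℕ) (n : ℤ) (hn : (s : ℤ) ≤ n) :
    LP s n ≤ (5 / 6 : ℚ) ^ primesBetween (s : ℤ) (n - 1) := by
  rcases eq_or_lt_of_le hn with h | h
  · rw [LP, if_pos h.symm]
    have h0 : primesBetween (s : ℤ) (n - 1) = 0 := by
      unfold primesBetween
      rw [Finset.Icc_eq_empty (by omega)]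
      simp
    rw [h0]
    norm_num
  · have key := W_bound s (n - 1) (by omega)
    have hle : LP s n ≤ W s (n - 1) := by
      rw [LP, if_neg (by omega), sum6]
      unfold W
      have e2 : n - 1 - 1 = n - 2 := by ring
      have e3 : n - 1 - 2 = n - 3 := by ring
      have e4 : n - 1 - 3 = n - 4 := by ring
      have e5 : n - 1 - 4 = n - 5 := by ring
      have e6 : n - 1 - 5 = n - 6 := by ring
      rw [e2, e3, e4, e5, e6]
      have := rAux_nonneg s (n-1)
      have := rAux_nonneg s (n-2)
      have := rAux_nonneg s (n-3)
      have := rAux_nonneg s (n-4)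
      have := rAux_nonneg s (n-5)
      have := rAux_nonneg s (n-6)
      linarith
    calc LP s n ≤ W s (n - 1) := hle
      _ ≤ _ := key
end
end
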